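/- arXiv:0911.2408 — 4 statements merged into one kernel-verified Lean document; each statement's English description precedes it below -/
import Mathlib

section
/- Let σ be the shift permutation of ℤ (a ↦ a+1) and fix n ≥ 1. For every nontrivial reduced word v on n+1 letters, the set of tuples (τ₁,…,τₙ) ∈ Sym(ℤ)ⁿ such that v(σ,τ₁,…,τₙ) ≠ 1 is open and dense in Sym(ℤ)ⁿ. -/
noncomputable section

/-- The topology of pointwise convergence on the symmetric group of `ℤ`:
induced from the product topology on `ℤ → ℤ` (with `ℤ` discrete). -/
instance permTop : TopologicalSpace (Equiv.Perm ℤ) :=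
  TopologicalSpace.induced (fun π : Equiv.Perm ℤ => (π : ℤ → ℤ)) Pi.topologicalSpace

/-- The shift permutation `a ↦ a + 1` of `ℤ`. -/
def shift : Equiv.Perm ℤ := Equiv.addRight 1

/-- The orbit of `a : ℤ` under the cyclic group generated by `γ`. -/
def permOrbit (γ : Equiv.Perm ℤ) (a : ℤ) : Set ℤ := {b | ∃ k : ℤ, (γ ^ k) a = b}

/-- Evaluation of a word on `n + 1` letters at `(σ, τ₁, …, τₙ)`, where the letter `0`
is sent to the shift `σ`. -/
def evalWord {n : ℕ} (τ : Fin n → Equiv.Perm ℤ) : FreeGroup (Fin (n + 1)) →* Equiv.Perm ℤ :=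
  FreeGroup.lift (Fin.cons shift τ)

/-!
Openness holds because evaluating a word is continuous and `{1}` is closed. For density, a
basic neighbourhood prescribes the `τᵢ` on a finite set `A`. Follow a point lying far above
`A` and its prescribed images through the reduced word, letter by letter: a shift letter moves it by `±1`, and any other
letter sends it to a fresh point `B * (j + 1)`. In a reduced word a run of shift letters has
constant sign, so for `B > 2ℓ` the `ℓ + 1` points visited are pairwise distinct. The moves
demanded of each letter, together with the prescribed values on `A`, then form a finite partial
injection, which extends to a permutation of `ℤ`; for this choice the word moves the starting
point.
-/

open Function Topology

theorem FreeGroup.continuous_lift_apply {X α G : Type*} [TopologicalSpace X] [Group G]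
    [TopologicalSpace G] [IsTopologicalGroup G] {g : X → α → G} (hg : Continuous g)
    (v : FreeGroup α) : Continuous fun x => FreeGroup.lift (g x) v := by
  induction v using FreeGroup.induction_on with
  | C1 => simp only [_root_.map_one]; exact continuous_const
  | of a => simp only [FreeGroup.lift_apply_of]; exact (continuous_apply a).comp hg
  | inv_of a h => simp only [_root_.map_inv]; exact h.inv
  | mul v₁ v₂ h₁ h₂ => simp only [_root_.map_mul]; exact h₁.mul h₂

theorem Equiv.Perm.exists_forall_mem_apply_eq {α : Type*} [Infinite α] {G : Set (α × α)}
    (hG : G.Finite) (hfst : G.InjOn Prod.fst) (hsnd : G.InjOn Prod.snd) :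
    ∃ π : Equiv.Perm α, ∀ p ∈ G, π p.1 = p.2 := by
  have : Finite G := hG
  let e : Prod.fst '' G ≃ Prod.snd '' G :=
    hfst.bijOn_image.equiv.symm.trans hsnd.bijOn_image.equiv
  obtain ⟨π, hπ⟩ := Cardinal.extend_function_of_lt (e.toEmbedding.trans (Embedding.subtype _))
    ((Cardinal.lt_aleph0_of_finite _).trans_le (Cardinal.aleph0_le_mk α)) ⟨Equiv.refl α⟩
  refine ⟨π, fun p hp => ?_⟩
  have hpe : hfst.bijOn_image.equiv.symm ⟨p.1, p, hp, rfl⟩ = ⟨p, hp⟩ := by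
    rw [Equiv.symm_apply_eq]; rfl
  rw [hπ ⟨p.1, p, hp, rfl⟩]
  simp only [e, Embedding.trans_apply, Equiv.coe_toEmbedding, Equiv.trans_apply, hpe]
  rfl

theorem List.prod_reverse_smul_of_getElem_smul {M β : Type*} [Monoid M] [MulAction M β]
    (l : List M) (p : ℕ → β) (h : ∀ j (hj : j < l.length), l[j] • p j = p (j + 1)) :
    l.reverse.prod • p 0 = p l.length := by
  induction l generalizing p with
  | nil => simp
  | cons x l ih =>
    rw [List.reverse_cons, List.prod_append, List.prod_singleton, mul_smul,
      show x • p 0 = p 1 from h 0 (Nat.succ_pos _), List.length_cons]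
    exact ih (fun j => p (j + 1)) fun j hj => h (j + 1) (Nat.succ_lt_succ hj)

theorem continuous_perm_apply (a : ℤ) : Continuous fun π : Equiv.Perm ℤ => π a :=
  (continuous_apply a).comp continuous_induced_dom

instance : IsTopologicalGroup (Equiv.Perm ℤ) where
  continuous_mul := by
    have happly : Continuous fun q : Equiv.Perm ℤ × ℤ => q.1 q.2 :=
      continuous_prod_of_discrete_right.2 continuous_perm_apply
    refine continuous_induced_rng.2 (continuous_pi fun a => ?_)
    exact happly.comp (continuous_fst.prodMk ((continuous_perm_apply a).comp continuous_snd))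
  continuous_inv := by
    refine continuous_induced_rng.2 (continuous_pi fun a => continuous_discrete_rng.2 fun b => ?_)
    have : (fun π : Equiv.Perm ℤ => π⁻¹ a) ⁻¹' {b} = (fun π => π b) ⁻¹' {a} := by
      ext π; exact Equiv.Perm.inv_eq_iff_eq.trans eq_comm
    show IsOpen ((fun π : Equiv.Perm ℤ => π⁻¹ a) ⁻¹' {b})
    rw [this]
    exact (continuous_perm_apply b).isOpen_preimage {a} (isOpen_discrete _)

instance : T2Space (Equiv.Perm ℤ) :=
  (Topology.IsEmbedding.induced DFunLike.coe_injective).t2Space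

theorem Equiv.Perm.exists_finset_of_mem_nhds {π : Equiv.Perm ℤ} {U : Set (Equiv.Perm ℤ)}
    (hU : U ∈ 𝓝 π) : ∃ A : Finset ℤ, {π' | ∀ a ∈ A, π' a = π a} ⊆ U := by
  rw [nhds_induced, Filter.mem_comap] at hU
  obtain ⟨s, hs, hsU⟩ := hU
  rw [nhds_pi, Filter.mem_pi'] at hs
  obtain ⟨A, t, ht, hts⟩ := hs
  refine ⟨A, fun π' hπ' => hsU (hts fun a ha => ?_)⟩
  simpa [hπ' a ha] using mem_of_mem_nhds (ht a)

theorem dense_of_forall_exists_eqOn {ι : Type*} {S : Set (ι → Equiv.Perm ℤ)}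
    (h : ∀ (τ₀ : ι → Equiv.Perm ℤ) (A : Finset ℤ), ∃ τ ∈ S, ∀ i, ∀ a ∈ A, τ i a = τ₀ i a) :
    Dense S := by
  classical
  refine dense_iff_inter_open.2 fun U hU ⟨τ₀, hτ₀⟩ => ?_
  have hUτ₀ := hU.mem_nhds hτ₀
  rw [nhds_pi, Filter.mem_pi'] at hUτ₀
  obtain ⟨I, t, ht, htU⟩ := hUτ₀
  choose A hA using fun i => Equiv.Perm.exists_finset_of_mem_nhds (ht i)
  obtain ⟨τ, hτS, hτ⟩ := h τ₀ (I.biUnion A)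
  exact ⟨τ, htU fun i hi => hA i fun a ha => hτ i a (Finset.mem_biUnion.2 ⟨i, hi, ha⟩), hτS⟩

def boolSign (b : Bool) : ℤ := cond b 1 (-1)

theorem boolSign_ne_zero (b : Bool) : boolSign b ≠ 0 := by cases b <;> decide

theorem abs_boolSign_mul (b : Bool) (x : ℤ) : |boolSign b * x| = |x| := by
  cases b <;> simp [boolSign]

theorem cond_shift_apply (b : Bool) (a : ℤ) : (cond b shift shift⁻¹) a = a + boolSign b := by
  cases b
  · simp [boolSign, shift, Equiv.Perm.inv_def]
  · simp [boolSign, shift]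

section ReducedSequences

variable {α : Type*} {w : ℕ → α × Bool} {ℓ : ℕ}

/-- `w 0, …, w (ℓ - 1)` is a reduced word, in the convention of `FreeGroup.IsReduced`. -/
def IsReducedUpTo (w : ℕ → α × Bool) (ℓ : ℕ) : Prop :=
  ∀ m, m + 1 < ℓ → (w m).1 = (w (m + 1)).1 → (w m).2 = (w (m + 1)).2

theorem IsReducedUpTo.snd_eq_of_adjacent (hw : IsReducedUpTo w ℓ) {j j' : ℕ} (hj : j < ℓ)
    (hj' : j' < ℓ) (hx : (w j).1 = (w j').1) (hadj : j + 1 = j' ∨ j' + 1 = j) :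
    (w j).2 = (w j').2 := by
  rcases hadj with rfl | rfl
  · exact hw j hj' hx
  · exact (hw j' hj hx.symm).symm

theorem FreeGroup.IsReduced.reverse {L : List (α × Bool)} (hL : FreeGroup.IsReduced L) :
    FreeGroup.IsReduced L.reverse :=
  List.isChain_reverse.2 (hL.imp fun _ _ h hx => (h hx.symm).symm)

theorem FreeGroup.IsReduced.isReducedUpTo_getD {L : List (α × Bool)}
    (hL : FreeGroup.IsReduced L) (d : α × Bool) :
    IsReducedUpTo (fun j => L.getD j d) L.length := fun m hm => by
  simp only [List.getD_eq_getElem _ _ (Nat.lt_of_succ_lt hm), List.getD_eq_getElem _ _ hm]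
  exact hL.getElem m hm

end ReducedSequences

section Trajectory

variable {α : Type*} {w : ℕ → α × Bool} {ℓ : ℕ}

/- Letter `w j` moves the point with index `j` to the point with index `j + 1`, so the
permutation it names sends the point with index `edgeSrc w j` to the one with index
`edgeTgt w j`. -/
def edgeSrc (w : ℕ → α × Bool) (j : ℕ) : ℕ := if (w j).2 then j else j + 1

def edgeTgt (w : ℕ → α × Bool) (j : ℕ) : ℕ := if (w j).2 then j + 1 else j

theorem edgeSrc_le {j : ℕ} (hj : j < ℓ) : edgeSrc w j ≤ ℓ := by
  unfold edgeSrc; split_ifs <;> omega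

theorem edgeTgt_le {j : ℕ} (hj : j < ℓ) : edgeTgt w j ≤ ℓ := by
  unfold edgeTgt; split_ifs <;> omega

theorem eq_of_edgeSrc_eq (hw : IsReducedUpTo w ℓ) {j j' : ℕ} (hj : j < ℓ) (hj' : j' < ℓ)
    (hx : (w j).1 = (w j').1) (h : edgeSrc w j = edgeSrc w j') : j = j' := by
  unfold edgeSrc at h
  by_contra hne
  have hb := hw.snd_eq_of_adjacent hj hj' hx (by split_ifs at h <;> omega)
  rw [hb] at h
  split_ifs at h <;> omega

theorem eq_of_edgeTgt_eq (hw : IsReducedUpTo w ℓ) {j j' : ℕ} (hj : j < ℓ) (hj' : j' < ℓ)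
    (hx : (w j).1 = (w j').1) (h : edgeTgt w j = edgeTgt w j') : j = j' := by
  unfold edgeTgt at h
  by_contra hne
  have hb := hw.snd_eq_of_adjacent hj hj' hx (by split_ifs at h <;> omega)
  rw [hb] at h
  split_ifs at h <;> omega

variable [DecidableEq α] {a₀ : α}

def runStart (a₀ : α) (w : ℕ → α × Bool) : ℕ → ℕ
  | 0 => 0
  | j + 1 => if (w j).1 = a₀ then runStart a₀ w j else j + 1

theorem runStart_le (j : ℕ) : runStart a₀ w j ≤ j := by
  induction j with
  | zero => rfl
  | succ j ih =>
    rw [runStart]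
    split_ifs <;> omega

theorem snd_runStart_eq (hw : IsReducedUpTo w ℓ) {j : ℕ} (hj : j < ℓ) (h : (w j).1 = a₀) :
    (w (runStart a₀ w j)).2 = (w j).2 := by
  induction j with
  | zero => rfl
  | succ j ih =>
    by_cases hj' : (w j).1 = a₀
    · rw [runStart, if_pos hj', ih (by omega) hj']
      exact hw j hj (hj'.trans h.symm)
    · rw [runStart, if_neg hj']

/-- The `j`-th point of the orbit we build: a letter other than `a₀` in position `j - 1` jumps to
the fresh point `B * (j + 1)`, and `a₀` acts as the shift. Since a run of `a₀`-letters in a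
reduced word has constant sign, after the last jump, at `k = runStart a₀ w j`, the point has moved
by `± (j - k)`. -/
def trajectory (a₀ : α) (w : ℕ → α × Bool) (B : ℤ) (j : ℕ) : ℤ :=
  B * (runStart a₀ w j + 1) + boolSign (w (runStart a₀ w j)).2 * (j - runStart a₀ w j)

variable {B : ℤ}

theorem trajectory_succ_of_fst_eq (hw : IsReducedUpTo w ℓ) {j : ℕ} (hj : j < ℓ)
    (h : (w j).1 = a₀) :
    trajectory a₀ w B (j + 1) = trajectory a₀ w B j + boolSign (w j).2 := by
  simp only [trajectory, runStart, if_pos h, snd_runStart_eq hw hj h]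
  push_cast
  ring

theorem abs_trajectory_sub_le {j : ℕ} (hj : j ≤ ℓ) :
    |trajectory a₀ w B j - B * (runStart a₀ w j + 1)| ≤ ℓ := by
  have hk := runStart_le (a₀ := a₀) (w := w) j
  rw [trajectory, add_sub_cancel_left, abs_boolSign_mul, abs_of_nonneg (by omega)]
  omega

theorem le_trajectory (hB : 0 ≤ B) {j : ℕ} (hj : j ≤ ℓ) : B - ℓ ≤ trajectory a₀ w B j := by
  have := neg_le_of_abs_le (abs_trajectory_sub_le (a₀ := a₀) (w := w) (B := B) hj)
  nlinarith [mul_nonneg hB (Int.natCast_nonneg (runStart a₀ w j))]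

theorem trajectory_injOn (hB : 2 * ℓ < B) : Set.InjOn (trajectory a₀ w B) (Set.Iic ℓ) := by
  intro j hj j' hj' h
  have hband : |B * (runStart a₀ w j + 1) - B * (runStart a₀ w j' + 1)| ≤ 2 * ℓ := by
    have h₁ := abs_trajectory_sub_le (a₀ := a₀) (w := w) (B := B) hj
    have h₂ := abs_trajectory_sub_le (a₀ := a₀) (w := w) (B := B) hj'
    rw [h, abs_sub_comm] at h₁
    have := abs_sub_le (B * (runStart a₀ w j + 1)) (trajectory a₀ w B j')
      (B * (runStart a₀ w j' + 1))
    linarith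
  have hrun : runStart a₀ w j = runStart a₀ w j' := by
    by_contra hne
    have hgap : B ≤ |B * (runStart a₀ w j + 1) - B * (runStart a₀ w j' + 1)| := by
      rw [← mul_sub, add_sub_add_right_eq_sub, abs_mul, abs_of_pos (by omega)]
      exact le_mul_of_one_le_right (by omega)
        (Int.one_le_abs (sub_ne_zero.2 (by exact_mod_cast hne)))
    omega
  rw [trajectory, trajectory, hrun, add_right_inj] at h
  exact_mod_cast sub_left_injective (mul_left_cancel₀ (boolSign_ne_zero _) h)

/-- What the permutation assigned to the letter `x` is forced to do: agree with `g₀ x` on `A`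
and move the trajectory along every occurrence of `x` in the word. -/
def letterGraph (a₀ : α) (w : ℕ → α × Bool) (g₀ : α → Equiv.Perm ℤ) (A : Finset ℤ) (ℓ : ℕ)
    (B : ℤ) (x : α) : Set (ℤ × ℤ) :=
  (fun a => (a, g₀ x a)) '' A ∪
    (fun j => (trajectory a₀ w B (edgeSrc w j), trajectory a₀ w B (edgeTgt w j))) ''
      {j | j < ℓ ∧ (w j).1 = x}

variable {g₀ : α → Equiv.Perm ℤ} {A : Finset ℤ}

theorem finite_letterGraph {x : α} : (letterGraph a₀ w g₀ A ℓ B x).Finite :=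
  (A.finite_toSet.image _).union (((Set.finite_lt_nat ℓ).subset fun _ hj => hj.1).image _)

theorem injOn_fst_letterGraph (hw : IsReducedUpTo w ℓ) (hB : 2 * ℓ < B)
    (hA : ∀ a ∈ A, a < B - ℓ) (x : α) : (letterGraph a₀ w g₀ A ℓ B x).InjOn Prod.fst := by
  have hlow : ∀ j < ℓ, ∀ a ∈ A, a ≠ trajectory a₀ w B (edgeSrc w j) := fun j hj a ha =>
    ((hA a ha).trans_le (le_trajectory (by omega) (edgeSrc_le hj))).ne
  rintro _ (⟨a, ha, rfl⟩ | ⟨j, ⟨hj, rfl⟩, rfl⟩) _ (⟨a', ha', rfl⟩ | ⟨j', ⟨hj', hx⟩, rfl⟩) h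
  · simp only at h
    rw [h]
  · exact absurd h (hlow j' hj' a ha)
  · exact absurd h.symm (hlow j hj a' ha')
  · rw [eq_of_edgeSrc_eq hw hj hj' hx.symm
      (trajectory_injOn hB (edgeSrc_le hj) (edgeSrc_le hj') h)]

theorem injOn_snd_letterGraph (hw : IsReducedUpTo w ℓ) (hB : 2 * ℓ < B)
    (hA : ∀ j < ℓ, ∀ a ∈ A, g₀ (w j).1 a < B - ℓ) (x : α) :
    (letterGraph a₀ w g₀ A ℓ B x).InjOn Prod.snd := by
  have hlow : ∀ j < ℓ, ∀ a ∈ A, g₀ (w j).1 a ≠ trajectory a₀ w B (edgeTgt w j) :=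
    fun j hj a ha => ((hA j hj a ha).trans_le (le_trajectory (by omega) (edgeTgt_le hj))).ne
  rintro _ (⟨a, ha, rfl⟩ | ⟨j, ⟨hj, rfl⟩, rfl⟩) _ (⟨a', ha', rfl⟩ | ⟨j', ⟨hj', hx⟩, rfl⟩) h
  · simp only at h
    rw [(g₀ x).injective h]
  · exact absurd h (hx ▸ hlow j' hj' a ha)
  · exact absurd h.symm (hlow j hj a' ha')
  · rw [eq_of_edgeTgt_eq hw hj hj' hx.symm
      (trajectory_injOn hB (edgeTgt_le hj) (edgeTgt_le hj') h)]

theorem exists_perms_along_trajectory (hw : IsReducedUpTo w ℓ) (hB : 2 * ℓ < B)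
    (hA : ∀ a ∈ A, a < B - ℓ) (hgA : ∀ j < ℓ, ∀ a ∈ A, g₀ (w j).1 a < B - ℓ) :
    ∃ g : α → Equiv.Perm ℤ, g a₀ = shift ∧ (∀ x ≠ a₀, ∀ a ∈ A, g x a = g₀ x a) ∧
      ∀ j < ℓ, (cond (w j).2 (g (w j).1) (g (w j).1)⁻¹) (trajectory a₀ w B j) =
        trajectory a₀ w B (j + 1) := by
  choose π hπ using fun x => Equiv.Perm.exists_forall_mem_apply_eq finite_letterGraph
    (injOn_fst_letterGraph (a₀ := a₀) (g₀ := g₀) hw hB hA x) (injOn_snd_letterGraph hw hB hgA x)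
  refine ⟨update π a₀ shift, update_self .., fun x hx a ha => ?_, fun j hj => ?_⟩
  · rw [update_of_ne hx]
    exact hπ x (a, g₀ x a) (Or.inl ⟨a, ha, rfl⟩)
  by_cases h : (w j).1 = a₀
  · rw [h, update_self, cond_shift_apply, trajectory_succ_of_fst_eq hw hj h]
  rw [update_of_ne h]
  have hedge := hπ _ _ (Or.inr ⟨j, ⟨hj, rfl⟩, rfl⟩)
  simp only [edgeSrc, edgeTgt] at hedge
  cases hb : (w j).2 <;> simp only [hb, cond_true, cond_false, if_true] at hedge ⊢
  · exact Equiv.Perm.inv_eq_iff_eq.2 hedge.symm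
  · exact hedge

end Trajectory

theorem exists_lift_ne_one_of_eqOn {α : Type*} [DecidableEq α] (a₀ : α)
    (g₀ : α → Equiv.Perm ℤ) (A : Finset ℤ) {v : FreeGroup α} (hv : v ≠ 1) :
    ∃ g : α → Equiv.Perm ℤ, g a₀ = shift ∧ (∀ x ≠ a₀, ∀ a ∈ A, g x a = g₀ x a) ∧
      FreeGroup.lift g v ≠ 1 := by
  set L := v.toWord.reverse
  set w : ℕ → α × Bool := fun j => L.getD j (a₀, true)
  have hw : IsReducedUpTo w L.length :=
    FreeGroup.isReduced_toWord.reverse.isReducedUpTo_getD _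
  have hL : 0 < L.length := by
    simpa [L, List.length_pos_iff] using mt FreeGroup.toWord_eq_nil_iff.1 hv
  obtain ⟨M, hM⟩ := (A ∪ (Finset.range L.length).biUnion fun j => A.image (g₀ (w j).1)).bddAbove
  set B : ℤ := |M| + 2 * L.length + 1
  have hB : 2 * L.length < B := by have := abs_nonneg M; omega
  have hA : ∀ a ∈ A, a < B - L.length := fun a ha => by
    have := hM (Finset.mem_union_left _ ha); have := le_abs_self M; omega
  have hgA : ∀ j < L.length, ∀ a ∈ A, g₀ (w j).1 a < B - L.length := fun j hj a ha => by
    have := hM (Finset.mem_union_right _ (Finset.mem_biUnion.2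
      ⟨j, Finset.mem_range.2 hj, Finset.mem_image_of_mem _ ha⟩))
    have := le_abs_self M; omega
  obtain ⟨g, hg₀, hgeq, hstep⟩ := exists_perms_along_trajectory (a₀ := a₀) hw hB hA hgA
  refine ⟨g, hg₀, hgeq, fun h1 => ?_⟩
  have horbit : FreeGroup.lift g v (trajectory a₀ w B 0) = trajectory a₀ w B L.length := by
    have := List.prod_reverse_smul_of_getElem_smul (L.map fun x => cond x.2 (g x.1) (g x.1)⁻¹)
      (trajectory a₀ w B) fun j hj => by
        rw [List.length_map] at hj
        rw [List.getElem_map, Equiv.Perm.smul_def, ← List.getD_eq_getElem _ (a₀, true) hj]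
        exact hstep j hj
    rwa [← List.map_reverse, ← FreeGroup.lift_mk, List.reverse_reverse, FreeGroup.mk_toWord,
      List.length_map] at this
  rw [h1, Equiv.Perm.one_apply] at horbit
  exact hL.ne (trajectory_injOn hB (Set.mem_Iic.2 (Nat.zero_le _)) Set.self_mem_Iic horbit)

theorem stmt_7_general (n : ℕ) (v : FreeGroup (Fin (n + 1))) (hv : v ≠ 1) :
    IsOpen {τ : Fin n → Equiv.Perm ℤ | evalWord τ v ≠ 1} ∧
      Dense {τ : Fin n → Equiv.Perm ℤ | evalWord τ v ≠ 1} := by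
  refine ⟨(isClosed_singleton.preimage
    (FreeGroup.continuous_lift_apply (continuous_const.finCons continuous_id) v)).isOpen_compl,
    dense_of_forall_exists_eqOn fun τ₀ A => ?_⟩
  obtain ⟨g, hg₀, hgeq, hg⟩ := exists_lift_ne_one_of_eqOn 0 (Fin.cons shift τ₀) A hv
  refine ⟨Fin.tail g, ?_, fun i a ha => hgeq i.succ (Fin.succ_ne_zero i) a ha⟩
  show evalWord (Fin.tail g) v ≠ 1
  rwa [evalWord, ← hg₀, Fin.cons_self_tail]

/-- for every nontrivial reduced word `v` on `n + 1` letters, the set of tuples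
`(τ₁, …, τₙ)` with `v(σ, τ₁, …, τₙ) ≠ 1` is open and dense. -/
theorem stmt_7 (n : ℕ) (hn : 1 ≤ n) (v : FreeGroup (Fin (n + 1))) (hv : v ≠ 1) :
    IsOpen {τ : Fin n → Equiv.Perm ℤ | evalWord τ v ≠ 1} ∧
      Dense {τ : Fin n → Equiv.Perm ℤ | evalWord τ v ≠ 1} :=
  stmt_7_general n v hv
end
end

section
/- Let σ be the shift permutation of ℤ and fix n ≥ 1. The set of tuples (τ₁,…,τₙ) ∈ Sym(ℤ)ⁿ such that the subgroup generated by σ,τ₁,…,τₙ is dense in Sym(ℤ) is residual in Sym(ℤ)ⁿ. -/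
noncomputable section

/-! Fix a finite partial bijection `s` of `ℤ`. The tuples `τ` whose group `⟨σ, τ⟩` contains an
extension of `s` form an open set, because the value of a word at a point depends on finitely
many values of the letters. They also form a dense set: given `τ` and a finite `F ⊆ ℤ`, choose
`m` so that the translate `s + (m, m)` avoids `F` in its domain and `τ₁ F` in its range, and
redefine `τ₁` off `F` to extend that translate; then `σ⁻ᵐ τ₁ σᵐ` extends `s`. There are only
countably many `s`, and a subgroup of `Sym ℤ` extending every finite partial bijection is dense. -/

open Set

namespace Equiv.Perm

theorem continuous_iff_continuous_apply {X : Type*} [TopologicalSpace X] {f : X → Perm ℤ} :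
    Continuous f ↔ ∀ x : ℤ, Continuous fun a => f a x :=
  continuous_induced_rng.trans continuous_pi_iff

theorem continuous_apply (x : ℤ) : Continuous fun π : Perm ℤ => π x :=
  continuous_iff_continuous_apply.1 continuous_id x

instance : IsTopologicalGroup (Perm ℤ) where
  continuous_mul := by
    have hev : Continuous fun q : Perm ℤ × ℤ => q.1 q.2 :=
      continuous_prod_of_discrete_right.2 fun x => continuous_apply x
    exact continuous_iff_continuous_apply.2 fun x =>
      hev.comp (continuous_fst.prodMk ((continuous_apply x).comp continuous_snd))
  continuous_inv := continuous_iff_continuous_apply.2 fun x =>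
    continuous_discrete_rng.2 fun y => by
      simpa only [preimage, mem_singleton_iff, inv_eq_iff_eq, eq_comm (a := x)] using
        (continuous_apply y).isOpen_preimage {x} (isOpen_discrete _)

theorem exists_finset_forall_apply_eq_imp_mem {V : Set (Perm ℤ)} (hV : IsOpen V) {π : Perm ℤ}
    (hπ : π ∈ V) : ∃ F : Finset ℤ, ∀ g : Perm ℤ, (∀ x ∈ F, g x = π x) → g ∈ V := by
  obtain ⟨t, ht, rfl⟩ := isOpen_induced_iff.1 hV
  obtain ⟨F, u, hu, hsub⟩ := isOpen_pi_iff.1 ht _ hπ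
  exact ⟨F, fun g hg => hsub fun x hx => by simpa [hg x hx] using (hu x hx).2⟩

theorem dense_of_forall_finset {H : Set (Perm ℤ)}
    (h : ∀ (π : Perm ℤ) (F : Finset ℤ), ∃ g ∈ H, ∀ x ∈ F, g x = π x) : Dense H := by
  refine dense_iff_inter_open.2 fun V hV ⟨π, hπ⟩ => ?_
  obtain ⟨F, hF⟩ := exists_finset_forall_apply_eq_imp_mem hV hπ
  obtain ⟨g, hgH, hg⟩ := h π F
  exact ⟨g, hF g hg, hgH⟩

theorem exists_forall_mem_apply_eq_s9 {α : Type*} [Infinite α] {R : Set (α × α)}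
    (hR : R.Finite) (h₁ : InjOn Prod.fst R) (h₂ : InjOn Prod.snd R) :
    ∃ π : Perm α, ∀ p ∈ R, π p.1 = p.2 := by
  classical
  have hcompl : ∀ u : Set α, u.Finite → Cardinal.mk ↥uᶜ = Cardinal.mk α := fun u hu =>
    Cardinal.mk_compl_of_infinite u (hu.lt_aleph0.trans_le (Cardinal.aleph0_le_mk α))
  obtain ⟨e⟩ : Nonempty (↥(Prod.fst '' R)ᶜ ≃ ↥(Prod.snd '' R)ᶜ) :=
    Cardinal.eq.1 ((hcompl _ (hR.image _)).trans (hcompl _ (hR.image _)).symm)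
  let e₁ := Equiv.Set.imageOfInjOn _ R h₁
  refine ⟨(Equiv.Set.sumCompl _).symm.trans
    (((e₁.symm.trans (Equiv.Set.imageOfInjOn _ R h₂)).sumCongr e).trans (Equiv.Set.sumCompl _)),
    fun p hp => ?_⟩
  have he₁ : e₁.symm ⟨p.1, mem_image_of_mem _ hp⟩ = ⟨p, hp⟩ := e₁.symm_apply_eq.2 rfl
  simp [Equiv.Set.sumCompl_symm_apply_of_mem (mem_image_of_mem _ hp), he₁,
    Equiv.Set.imageOfInjOn]

end Equiv.Perm

theorem Set.Finite.setOf_exists_add_mem {G : Type*} [AddCommGroup G] {A B : Set G}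
    (hA : A.Finite) (hB : B.Finite) : {m : G | ∃ a ∈ A, a + m ∈ B}.Finite :=
  (hB.sub hA).subset fun m ⟨a, ha, hm⟩ => ⟨a + m, hm, a, ha, add_sub_cancel_left a m⟩

theorem continuous_freeGroup_lift {X G ι : Type*} [TopologicalSpace X] [TopologicalSpace G]
    [Group G] [ContinuousMul G] [ContinuousInv G] {f : X → ι → G}
    (hf : ∀ i, Continuous fun x => f x i) (w : FreeGroup ι) :
    Continuous fun x => FreeGroup.lift (f x) w := by
  induction w using FreeGroup.induction_on with
  | C1 => simpa only [map_one] using continuous_const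
  | of i => simpa only [FreeGroup.lift_apply_of] using hf i
  | inv_of i ih => simp only [map_inv]; exact ih.inv
  | mul u v hu hv => simp only [map_mul]; exact hu.mul hv

open Equiv Perm

theorem dense_setOf_exists_forall_apply_add_eq {s : Finset (ℤ × ℤ)}
    (h₁ : InjOn Prod.fst (s : Set (ℤ × ℤ))) (h₂ : InjOn Prod.snd (s : Set (ℤ × ℤ))) :
    Dense {π : Perm ℤ | ∃ m : ℤ, ∀ p ∈ s, π (p.1 + m) = p.2 + m} := by
  refine dense_of_forall_finset fun ρ F => ?_
  obtain ⟨m, hm⟩ : ({m | ∃ a ∈ Prod.fst '' (s : Set (ℤ × ℤ)), a + m ∈ (F : Set ℤ)} ∪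
      {m | ∃ b ∈ Prod.snd '' (s : Set (ℤ × ℤ)), b + m ∈ ρ '' F})ᶜ.Nonempty :=
    (((s.finite_toSet.image _).setOf_exists_add_mem F.finite_toSet).union
      ((s.finite_toSet.image _).setOf_exists_add_mem
        (F.finite_toSet.image _))).infinite_compl.nonempty
  simp only [mem_compl_iff, mem_union, mem_ofPred_eq, not_or, not_exists, not_and, mem_image,
    forall_exists_index, and_imp, forall_apply_eq_imp_iff₂, Finset.mem_coe] at hm
  obtain ⟨hmF, hmρ⟩ := hm
  set R : Set (ℤ × ℤ) := (fun x => (x, ρ x)) '' (F : Set ℤ) ∪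
    (fun p : ℤ × ℤ => (p.1 + m, p.2 + m)) '' (s : Set (ℤ × ℤ))
  have hR₁ : InjOn Prod.fst R := by
    rintro _ (⟨x, hx, rfl⟩ | ⟨p, hp, rfl⟩) _ (⟨y, hy, rfl⟩ | ⟨q, hq, rfl⟩) h <;>
      dsimp only at h ⊢
    · rw [h]
    · exact absurd (h ▸ hx) (hmF q hq)
    · exact absurd (h ▸ hy) (hmF p hp)
    · rw [h₁ hp hq (add_right_cancel h)]
  have hR₂ : InjOn Prod.snd R := by
    rintro _ (⟨x, hx, rfl⟩ | ⟨p, hp, rfl⟩) _ (⟨y, hy, rfl⟩ | ⟨q, hq, rfl⟩) h <;>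
      dsimp only at h ⊢
    · rw [ρ.injective h]
    · exact absurd h (hmρ q hq x hx)
    · exact absurd h.symm (hmρ p hp y hy)
    · rw [h₂ hp hq (add_right_cancel h)]
  obtain ⟨π, hπ⟩ := exists_forall_mem_apply_eq_s9
    ((F.finite_toSet.image _).union (s.finite_toSet.image _)) hR₁ hR₂
  exact ⟨π, ⟨m, fun p hp => hπ _ (Or.inr ⟨p, hp, rfl⟩)⟩, fun x hx => hπ _ (Or.inl ⟨x, hx, rfl⟩)⟩

theorem shift_zpow_apply (m x : ℤ) : (shift ^ m) x = x + m := by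
  simp [shift]

theorem continuous_evalWord {n : ℕ} (w : FreeGroup (Fin (n + 1))) :
    Continuous fun τ : Fin n → Perm ℤ => evalWord τ w :=
  continuous_freeGroup_lift (fun i => by
    refine Fin.cases ?_ (fun j => ?_) i <;> simp [continuous_const, _root_.continuous_apply]) w

def realizers (n : ℕ) (s : Finset (ℤ × ℤ)) : Set (Fin n → Perm ℤ) :=
  {τ | ∃ g ∈ Subgroup.closure (range (Fin.cons shift τ)), ∀ p ∈ s, g p.1 = p.2}

theorem isOpen_realizers (n : ℕ) (s : Finset (ℤ × ℤ)) : IsOpen (realizers n s) := by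
  have hunion : realizers n s = ⋃ w, ⋂ p ∈ s, (fun τ => evalWord τ w p.1) ⁻¹' {p.2} := by
    ext τ
    simp_rw [realizers, ← FreeGroup.range_lift_eq_closure, MonoidHom.mem_range]
    simp [evalWord]
  rw [hunion]
  exact isOpen_iUnion fun w => isOpen_biInter_finset fun p _ =>
    ((continuous_apply p.1).comp (continuous_evalWord w)).isOpen_preimage _ (isOpen_discrete _)

theorem dense_realizers {n : ℕ} (hn : 1 ≤ n) {s : Finset (ℤ × ℤ)}
    (h₁ : InjOn Prod.fst (s : Set (ℤ × ℤ))) (h₂ : InjOn Prod.snd (s : Set (ℤ × ℤ))) :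
    Dense (realizers n s) := by
  classical
  set j : Fin n := ⟨0, hn⟩
  intro τ
  have hmaps : MapsTo (Function.update τ j)
      {π : Perm ℤ | ∃ m : ℤ, ∀ p ∈ s, π (p.1 + m) = p.2 + m} (realizers n s) := by
    rintro π ⟨m, hm⟩
    have hσ : shift ∈ Subgroup.closure (range (Fin.cons shift (Function.update τ j π))) :=
      Subgroup.subset_closure ⟨0, rfl⟩
    have hπ : π ∈ Subgroup.closure (range (Fin.cons shift (Function.update τ j π))) :=
      Subgroup.subset_closure ⟨j.succ, by simp⟩
    refine ⟨shift ^ (-m) * π * shift ^ m, mul_mem (mul_mem (zpow_mem hσ _) hπ) (zpow_mem hσ _),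
      fun p hp => ?_⟩
    simp only [Perm.mul_apply, shift_zpow_apply, hm p hp, add_neg_cancel_right]
  have hcont : Continuous (Function.update τ j) := continuous_const.update j continuous_id
  simpa using map_mem_closure hcont (dense_setOf_exists_forall_apply_add_eq h₁ h₂ (τ j)) hmaps

/-- the set of tuples `(τ₁, …, τₙ)` such that `⟨σ, τ₁, …, τₙ⟩` is dense in
`Sym ℤ` is residual. -/
theorem stmt_9 (n : ℕ) (hn : 1 ≤ n) :
    {τ : Fin n → Equiv.Perm ℤ |
        Dense ((Subgroup.closure (Set.range (Fin.cons shift τ)) :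
          Subgroup (Equiv.Perm ℤ)) : Set (Equiv.Perm ℤ))} ∈
      residual (Fin n → Equiv.Perm ℤ) := by
  have hres : (⋂ s ∈ {s : Finset (ℤ × ℤ) | InjOn Prod.fst (s : Set (ℤ × ℤ)) ∧
      InjOn Prod.snd (s : Set (ℤ × ℤ))}, realizers n s) ∈ residual (Fin n → Perm ℤ) :=
    (countable_bInter_mem (Set.to_countable _)).2 fun s hs =>
      residual_of_dense_open (isOpen_realizers n s) (dense_realizers hn hs.1 hs.2)
  refine Filter.mem_of_superset hres fun τ hτ => dense_of_forall_finset fun π F => ?_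
  obtain ⟨g, hg, hgπ⟩ :=
    mem_iInter₂.1 hτ (F.image fun x => (x, π x)) ⟨by simp [InjOn], by simp [InjOn]⟩
  exact ⟨g, hg, fun x hx => hgπ (x, π x) (Finset.mem_image_of_mem _ hx)⟩
end
end

section
/- Let G be a Hausdorff topological group and γ ∈ G such that the cyclic subgroup ⟨γ⟩ is non-discrete. Then for every n₀ ∈ ℕ, the set {γⁿ : n ≥ n₀} is dense in the closure of ⟨γ⟩. -/
noncomputable section

/-!
Non-discreteness of `⟨γ⟩` puts powers `γ ^ m` with `m > 0` in every neighbourhood of `1`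
(pass to `γ⁻¹` for negative exponents). Choosing `γ ^ m` close enough to `1` that its `N`-th power
is still close, `γ ^ (m * N)` with `m * N ≥ N` shows `1 ∈ closure {γ ^ n | n ≥ N}` for every `N`;
left translation by `γ ^ k` then gives the same for every `γ ^ k`.
-/

open Topology

section

variable {G : Type*} [Group G] [TopologicalSpace G] [IsTopologicalGroup G] {γ : G}

theorem exists_zpow_mem_of_not_discreteTopology (h : ¬ DiscreteTopology (Subgroup.zpowers γ))
    {U : Set G} (hU : U ∈ 𝓝 1) : ∃ k : ℤ, k ≠ 0 ∧ γ ^ k ∈ U := by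
  by_contra! hγU
  refine h (discreteTopology_of_isOpen_singleton_one (isOpen_iff_mem_nhds.mpr ?_))
  rintro _ rfl
  refine (mem_nhds_subtype _ _ _).mpr ⟨U, hU, ?_⟩
  rintro ⟨_, k, rfl⟩ hkU
  obtain rfl | hk := eq_or_ne k 0
  · simp
  · exact absurd hkU (hγU k hk)

theorem exists_pow_mem_of_not_discreteTopology (h : ¬ DiscreteTopology (Subgroup.zpowers γ))
    {U : Set G} (hU : U ∈ 𝓝 1) : ∃ n : ℕ, 0 < n ∧ γ ^ n ∈ U := by
  obtain ⟨k, hk, hkU, hkU'⟩ :=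
    exists_zpow_mem_of_not_discreteTopology h (Filter.inter_mem hU (inv_mem_nhds_one G hU))
  refine ⟨k.natAbs, Int.natAbs_pos.mpr hk, ?_⟩
  rcases Int.natAbs_eq k with hk | hk
  · rwa [hk, zpow_natCast] at hkU
  · rwa [hk, zpow_neg, zpow_natCast, Set.mem_inv, inv_inv] at hkU'

theorem one_mem_closure_pow_ge (h : ¬ DiscreteTopology (Subgroup.zpowers γ)) (N : ℕ) :
    (1 : G) ∈ closure {x : G | ∃ n : ℕ, N ≤ n ∧ x = γ ^ n} := by
  refine mem_closure_iff_nhds.mpr fun U hU ↦ ?_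
  obtain ⟨m, hm, hmU⟩ :=
    exists_pow_mem_of_not_discreteTopology h ((continuous_pow N).tendsto' 1 1 (one_pow N) hU)
  exact ⟨γ ^ (m * N), by rwa [pow_mul], m * N, Nat.le_mul_of_pos_left N hm, rfl⟩

theorem zpow_mem_closure_pow_ge (h : ¬ DiscreteTopology (Subgroup.zpowers γ)) (k : ℤ) (N : ℕ) :
    γ ^ k ∈ closure {x : G | ∃ n : ℕ, N ≤ n ∧ x = γ ^ n} := by
  have hmaps : Set.MapsTo (γ ^ k * ·) {x : G | ∃ n : ℕ, N + k.natAbs ≤ n ∧ x = γ ^ n}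
      {x : G | ∃ n : ℕ, N ≤ n ∧ x = γ ^ n} := by
    rintro _ ⟨n, hn, rfl⟩
    refine ⟨(k + n).toNat, by omega, ?_⟩
    dsimp only
    rw [← zpow_natCast γ n, ← zpow_add, ← zpow_natCast γ, Int.toNat_of_nonneg (by omega)]
  simpa using map_mem_closure (continuous_const_mul _) (one_mem_closure_pow_ge h _) hmaps

end

theorem stmt_16_general {G : Type*} [Group G] [TopologicalSpace G] [IsTopologicalGroup G]
    (γ : G) (h : ¬ DiscreteTopology (Subgroup.zpowers γ)) (n₀ : ℕ) :
    closure ((Subgroup.zpowers γ : Subgroup G) : Set G) ⊆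
      closure {x : G | ∃ n : ℕ, n₀ ≤ n ∧ x = γ ^ n} := by
  refine closure_minimal ?_ isClosed_closure
  rintro _ ⟨k, rfl⟩
  exact zpow_mem_closure_pow_ge h k n₀

/-- in a Hausdorff topological group, if `⟨γ⟩` is non-discrete then for every
`n₀` the set `{γ ^ n : n ≥ n₀}` is dense in the closure of `⟨γ⟩`. -/
theorem stmt_16 {G : Type*} [Group G] [TopologicalSpace G] [IsTopologicalGroup G] [T2Space G]
    (γ : G) (h : ¬ DiscreteTopology (Subgroup.zpowers γ)) (n₀ : ℕ) :
    closure ((Subgroup.zpowers γ : Subgroup G) : Set G) ⊆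
      closure {x : G | ∃ n : ℕ, n₀ ≤ n ∧ x = γ ^ n} :=
  stmt_16_general γ h n₀
end
end

section
/- Let Γ be a group, H a completely metrizable topological group, Ω a completely metrizable subspace of a topological group, and for each ω ∈ Ω let f_ω : Γ → H be a homomorphism such that for each fixed g ∈ Γ the map ω ↦ f_ω(g) is continuous. Suppose Γ is countable and there is a sequence (ω_n) in Ω such that (f_{ω_n}) is eventually faithful (for each g ≠ 1 there is n₀ with f_{ω_n}(g) ≠ 1 for all n ≥ n₀) and {ω_n : n ≥ n₀} is dense in Ω for every n₀. If H is Hausdorff, then the set {ω ∈ Ω : f_ω is injective} is residual in Ω; in particular it is nonempty. -/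
noncomputable section

/-! Injectivity of `f ω` is the countable conjunction, over `g ≠ 1`, of the open conditions
`f ω g ≠ 1`. Each of these holds along a tail of `ωseq`, which is dense, so each defines a dense
open set; their intersection is residual, hence dense and nonempty by Baire's theorem. -/

open Filter

theorem setOf_injective_eq_iInter_setOf_ne_one {Ω Γ H : Type*} [Group Γ] [Group H]
    (f : Ω → Γ →* H) :
    {ω | Function.Injective (f ω)} = ⋂ g : {g : Γ // g ≠ 1}, {ω | f ω g ≠ 1} := by
  ext ω
  simp only [Set.mem_ofPred_eq, Set.mem_iInter, injective_iff_map_eq_one, Subtype.forall]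
  exact forall_congr' fun g => not_imp_not.symm

theorem mem_residual_of_isOpen_of_eventually_mem {X : Type*} [TopologicalSpace X] {U : Set X}
    {u : ℕ → X} (hU : IsOpen U) (hu : ∀ᶠ n in atTop, u n ∈ U)
    (hdense : ∀ n₀ : ℕ, Dense {x : X | ∃ n : ℕ, n₀ ≤ n ∧ u n = x}) : U ∈ residual X := by
  obtain ⟨n₀, hn₀⟩ := eventually_atTop.1 hu
  refine residual_of_dense_open hU ((hdense n₀).mono ?_)
  rintro _ ⟨n, hn, rfl⟩
  exact hn₀ n hn

theorem stmt_18_general {Γ H Ω : Type*} [Group Γ] [Countable Γ]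
    [Group H] [MetricSpace H]
    [MetricSpace Ω] [CompleteSpace Ω]
    (f : Ω → (Γ →* H)) (hcont : ∀ g : Γ, Continuous fun ω => f ω g)
    (ωseq : ℕ → Ω)
    (hef : ∀ g : Γ, g ≠ 1 → ∃ n₀ : ℕ, ∀ n : ℕ, n₀ ≤ n → f (ωseq n) g ≠ 1)
    (hdense : ∀ n₀ : ℕ, Dense {x : Ω | ∃ n : ℕ, n₀ ≤ n ∧ ωseq n = x}) :
    {ω : Ω | Function.Injective (f ω)} ∈ residual Ω ∧
      {ω : Ω | Function.Injective (f ω)}.Nonempty := by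
  have hres : {ω : Ω | Function.Injective (f ω)} ∈ residual Ω := by
    rw [setOf_injective_eq_iInter_setOf_ne_one]
    exact countable_iInter_mem.2 fun ⟨g, hg⟩ =>
      mem_residual_of_isOpen_of_eventually_mem (isOpen_ne.preimage (hcont g))
        (eventually_atTop.2 (hef g hg)) hdense
  have : Nonempty Ω := ⟨ωseq 0⟩
  exact ⟨hres, (dense_of_mem_residual hres).nonempty⟩

/-- abstract Baire-category argument producing a faithful homomorphism from a
parametrized family with an eventually faithful, eventually dense sequence of parameters. -/
theorem stmt_18 {Γ H Ω : Type*} [Group Γ] [Countable Γ]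
    [Group H] [MetricSpace H] [CompleteSpace H] [IsTopologicalGroup H]
    [MetricSpace Ω] [CompleteSpace Ω]
    (f : Ω → (Γ →* H)) (hcont : ∀ g : Γ, Continuous fun ω => f ω g)
    (ωseq : ℕ → Ω)
    (hef : ∀ g : Γ, g ≠ 1 → ∃ n₀ : ℕ, ∀ n : ℕ, n₀ ≤ n → f (ωseq n) g ≠ 1)
    (hdense : ∀ n₀ : ℕ, Dense {x : Ω | ∃ n : ℕ, n₀ ≤ n ∧ ωseq n = x}) :
    {ω : Ω | Function.Injective (f ω)} ∈ residual Ω ∧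
      {ω : Ω | Function.Injective (f ω)}.Nonempty :=
  stmt_18_general f hcont ωseq hef hdense
end
end
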